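/- arXiv:2112.12977 — 2 statements merged into one kernel-verified Lean document; each statement's English description precedes it below -/
import Mathlib

section
/- Let T be a resolving subcategory of an abelian category A with enough projectives, and let 0 → A₁ → A₂ → A₃ → 0 be exact. If T-pd A₂ ≠ T-pd A₃, then T-pd A₁ = max{T-pd A₂, T-pd A₃ − 1}. -/
open CategoryTheory

universe v u

namespace RelHomDim

variable {C : Type u} [Category.{v} C] [Abelian C]

/-- A (full, additive, iso-closed) subcategory, given as a predicate on objects,
is *resolving* if it contains all projective objects, is closed under extensions,
kernels of epimorphisms, and direct summands (retracts). -/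
def IsResolving (T : C → Prop) : Prop :=
  (∀ X Y : C, (X ≅ Y) → T X → T Y) ∧
  (∀ P : C, Projective P → T P) ∧
  (∀ S : ShortComplex C, S.ShortExact → T S.X₁ → T S.X₃ → T S.X₂) ∧
  (∀ S : ShortComplex C, S.ShortExact → T S.X₂ → T S.X₃ → T S.X₁) ∧
  (∀ X Y : C, T (X ⊞ Y) → T X)

/-- `pdLE T n M` means that `M` admits a resolution
`0 → Xₙ → ⋯ → X₁ → X₀ → M → 0` with all `Xᵢ` in `T`, i.e. the `T`-projective
dimension of `M` is at most `n`. -/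
def pdLE (T : C → Prop) : ℕ → C → Prop
  | 0, M => T M
  | n + 1, M => ∃ S : ShortComplex C, S.ShortExact ∧ Nonempty (S.X₃ ≅ M) ∧
      T S.X₂ ∧ pdLE T n S.X₁

/-- The `T`-projective dimension of `M`, as an element of `ℕ∞` (`⊤` if `M` has no
finite resolution by objects of `T`). -/
noncomputable def pd (T : C → Prop) (M : C) : ℕ∞ :=
  sInf {n : ℕ∞ | ∃ k : ℕ, n = (k : ℕ∞) ∧ pdLE T k M}

end RelHomDim

namespace RelHomDimAux

open CategoryTheory.Limits

variable {C : Type u} [Category.{v} C] [Abelian C]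

/-- kernel SES of an epi. -/
lemma kernelSES {Y Z : C} (g : Y ⟶ Z) [Epi g] :
    (ShortComplex.mk (kernel.ι g) g (kernel.condition g)).ShortExact := by
  refine ShortComplex.ShortExact.mk' ?_ inferInstance inferInstance
  exact ShortComplex.exact_of_f_is_kernel _ (kernelIsKernel g)

/-- pullback of an epi `v` (with given kernel `k`) along `u` : the first projection
is epi with "kernel" `k`. -/
lemma pullbackFstSES {X Z K Y : C} (u : X ⟶ Z) (v : Y ⟶ Z) [Epi v]
    (k : K ⟶ Y) [Mono k] (wk : k ≫ v = 0) (hk : IsLimit (KernelFork.ofι k wk)) :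
    (ShortComplex.mk (pullback.lift (0 : K ⟶ X) k (by simp [wk]))
      (pullback.fst u v) (by simp [pullback.lift_fst])).ShortExact := by
  have hmono : Mono (pullback.lift (0 : K ⟶ X) k (by simp [wk]) : K ⟶ pullback u v) := by
    have : (pullback.lift (0 : K ⟶ X) k (by simp [wk])) ≫ pullback.snd u v = k := by simp [pullback.lift_snd]
    exact mono_of_mono_fac this
  refine ShortComplex.ShortExact.mk' ?_ hmono inferInstance
  refine ShortComplex.exact_of_f_is_kernel _ ?_
  have hw : ∀ {W : C} (t : W ⟶ pullback u v), t ≫ pullback.fst u v = 0 →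
      (t ≫ pullback.snd u v) ≫ v = 0 := fun {W} t ht => by
    rw [Category.assoc, ← pullback.condition, ← Category.assoc, ht, zero_comp]
  refine KernelFork.IsLimit.ofι _ _
    (fun {W} t ht => (KernelFork.IsLimit.lift' hk (t ≫ pullback.snd u v) (hw t ht)).1)
    (fun {W} t ht => ?_) (fun {W} t ht m hm => ?_)
  · apply pullback.hom_ext
    · simp [ht, pullback.lift_fst]
    · have := (KernelFork.IsLimit.lift' hk (t ≫ pullback.snd u v) (hw t ht)).2
      simpa [pullback.lift_snd] using this
  · rw [← cancel_mono k]
    have h2 := (KernelFork.IsLimit.lift' hk (t ≫ pullback.snd u v) (hw t ht)).2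
    show m ≫ k = _ ≫ k
    rw [show ((KernelFork.IsLimit.lift' hk (t ≫ pullback.snd u v) (hw t ht)).1 : W ⟶ K) ≫ k
        = t ≫ pullback.snd u v from h2, ← hm]
    simp [pullback.lift_snd]

/-- second projection of pullback of epi `p` along mono `S.f`, composed to `X₃`. -/
lemma pullbackSndSES (S : ShortComplex C) (hS : S.ShortExact) {Y : C} (p : Y ⟶ S.X₂) [Epi p] :
    (ShortComplex.mk (pullback.snd S.f p) (p ≫ S.g)
      (by rw [← pullback.condition_assoc, S.zero, comp_zero])).ShortExact := by
  have := hS.mono_f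
  have := hS.epi_g
  refine ShortComplex.ShortExact.mk' ?_ inferInstance inferInstance
  refine ShortComplex.exact_of_f_is_kernel _ ?_
  have hw : ∀ {W : C} (t : W ⟶ Y), t ≫ p ≫ S.g = 0 → (t ≫ p) ≫ S.g = 0 := fun t ht => by
    rwa [Category.assoc]
  refine KernelFork.IsLimit.ofι _ _
    (fun {W} t ht => pullback.lift (hS.exact.lift (t ≫ p) (hw t ht)) t
      (by rw [ShortComplex.Exact.lift_f]))
    (fun {W} t ht => by simp [pullback.lift_snd]) (fun {W} t ht m hm => ?_)
  · rw [← cancel_mono (pullback.snd S.f p)]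
    simpa [pullback.lift_snd] using hm

/-- the split SES `X → X ⊞ Y → Y`. -/
lemma biprodSES (X Y : C) :
    (ShortComplex.mk (biprod.inl : X ⟶ X ⊞ Y) (biprod.snd : X ⊞ Y ⟶ Y)
      biprod.inl_snd).ShortExact := by
  refine ShortComplex.ShortExact.mk' ?_ inferInstance inferInstance
  refine ShortComplex.exact_of_f_is_kernel _ ?_
  refine KernelFork.IsLimit.ofι _ _
    (fun {W} t ht => t ≫ biprod.fst)
    (fun {W} t ht => by
      apply biprod.hom_ext <;> simp_all)
    (fun {W} t ht m hm => by
      have : m ≫ (biprod.inl : X ⟶ X ⊞ Y) ≫ biprod.fst = t ≫ biprod.fst := by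
        rw [← Category.assoc, hm]
      simpa using this)

/-- postcomposing the epi of a SES with an iso preserves short exactness. -/
lemma SESpostIso (S : ShortComplex C) (hS : S.ShortExact) {M : C} (e : S.X₃ ≅ M) :
    (ShortComplex.mk S.f (S.g ≫ e.hom)
      (by rw [← Category.assoc, S.zero, zero_comp])).ShortExact := by
  have := hS.mono_f
  have := hS.epi_g
  refine ShortComplex.ShortExact.mk' ?_ inferInstance (epi_comp _ _)
  refine ShortComplex.exact_of_f_is_kernel _ ?_
  have hw : ∀ {W : C} (t : W ⟶ S.X₂), t ≫ S.g ≫ e.hom = 0 → t ≫ S.g = 0 := fun t ht => by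
    rw [← cancel_mono e.hom, Category.assoc, ht, zero_comp]
  refine KernelFork.IsLimit.ofι _ _
    (fun {W} t ht => hS.exact.lift t (hw t ht))
    (fun {W} t ht => by rw [ShortComplex.Exact.lift_f])
    (fun {W} t ht m hm => ?_)
  · rw [← cancel_mono S.f]
    dsimp at hm
    rw [ShortComplex.Exact.lift_f, hm]

section Horseshoe

open CategoryTheory.Abelian.Pseudoelement

attribute [local instance] CategoryTheory.Abelian.Pseudoelement.objectToSort
  CategoryTheory.Abelian.Pseudoelement.homToFun

lemma pseudo_id_apply {Q : C} (x : Q) : (𝟙 Q : Q ⟶ Q) x = x :=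
  Quotient.inductionOn x fun a => by rw [pseudoApply_mk', Category.comp_id]; rfl

/-- Horseshoe-type lemma: given a SES `S` and "presentations" `K₁ → P₁ → S.X₁`,
`K₃ → P₃ → S.X₃` with `P₃` projective, there is an epi `r : P₁ ⊞ P₃ ⟶ S.X₂`
whose kernel sits in a SES `K₁ → kernel r → K₃`. -/
lemma horseshoe (S : ShortComplex C) (hS : S.ShortExact)
    {P₁ K₁ : C} (q₁ : P₁ ⟶ S.X₁) (k₁ : K₁ ⟶ P₁) (w₁ : k₁ ≫ q₁ = 0)
    (h₁ : (ShortComplex.mk k₁ q₁ w₁).ShortExact)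
    {P₃ K₃ : C} (q₃ : P₃ ⟶ S.X₃) (k₃ : K₃ ⟶ P₃) (w₃ : k₃ ≫ q₃ = 0)
    (h₃ : (ShortComplex.mk k₃ q₃ w₃).ShortExact)
    (hP₃ : Projective P₃) :
    ∃ (r : P₁ ⊞ P₃ ⟶ S.X₂) (_ : Epi r) (a : K₁ ⟶ kernel r) (b : kernel r ⟶ K₃)
      (wab : a ≫ b = 0), (ShortComplex.mk a b wab).ShortExact := by
  haveI := hS.mono_f
  haveI := hS.epi_g
  haveI : Epi q₁ := h₁.epi_g
  haveI : Epi q₃ := h₃.epi_g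
  haveI : Mono k₁ := h₁.mono_f
  haveI : Mono k₃ := h₃.mono_f
  haveI := hP₃
  set l : P₃ ⟶ S.X₂ := Projective.factorThru q₃ S.g with hl
  have hlg : l ≫ S.g = q₃ := Projective.factorThru_comp _ _
  set r : P₁ ⊞ P₃ ⟶ S.X₂ := biprod.desc (q₁ ≫ S.f) l with hrdef
  have hinlr : (biprod.inl : P₁ ⟶ P₁ ⊞ P₃) ≫ r = q₁ ≫ S.f := biprod.inl_desc _ _
  have hinrr : (biprod.inr : P₃ ⟶ P₁ ⊞ P₃) ≫ r = l := biprod.inr_desc _ _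
  have hrg : r ≫ S.g = biprod.snd ≫ q₃ := by
    apply biprod.hom_ext'
    · rw [← Category.assoc, hinlr, Category.assoc, S.zero, comp_zero,
        ← Category.assoc, biprod.inl_snd, zero_comp]
    · rw [← Category.assoc, hinrr, hlg, ← Category.assoc, biprod.inr_snd, Category.id_comp]
  have hepir : Epi r := by
    apply Preadditive.epi_of_cancel_zero
    intro R h hh
    have h1 : (q₁ ≫ S.f) ≫ h = 0 := by rw [← hinlr, Category.assoc, hh, comp_zero]
    have h2 : S.f ≫ h = 0 := by
      rw [Category.assoc] at h1
      exact (cancel_epi q₁).1 (by rw [h1, comp_zero])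
    set h' := hS.exact.desc h h2 with hh'
    have h3 : S.g ≫ h' = h := hS.exact.g_desc h h2
    have h4 : q₃ ≫ h' = 0 := by
      rw [← hlg, Category.assoc, h3, ← hinrr, Category.assoc, hh, comp_zero]
    have h5 : h' = 0 := (cancel_epi q₃).1 (by rw [h4, comp_zero])
    rw [← h3, h5, comp_zero]
  have hki : k₁ ≫ biprod.inl ≫ r = 0 := by
    rw [hinlr, ← Category.assoc, w₁, zero_comp]
  set a : K₁ ⟶ kernel r := kernel.lift r (k₁ ≫ biprod.inl) (by rw [Category.assoc, hki]) with ha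
  have hai : a ≫ kernel.ι r = k₁ ≫ biprod.inl := kernel.lift_ι _ _ _
  have hbw : (kernel.ι r ≫ biprod.snd) ≫ q₃ = 0 := by
    rw [Category.assoc, ← hrg, kernel.condition_assoc, zero_comp]
  set b : kernel r ⟶ K₃ := h₃.exact.lift (kernel.ι r ≫ biprod.snd) hbw with hb
  have hbk : b ≫ k₃ = kernel.ι r ≫ biprod.snd := h₃.exact.lift_f _ _
  have wab : a ≫ b = 0 := by
    rw [← cancel_mono k₃, Category.assoc, hbk, zero_comp, ← Category.assoc, hai,
      Category.assoc, biprod.inl_snd, comp_zero]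
  refine ⟨r, hepir, a, b, wab, ?_⟩
  have hmonoa : Mono a := by
    have : Mono (k₁ ≫ (biprod.inl : P₁ ⟶ P₁ ⊞ P₃)) := mono_comp _ _
    exact mono_of_mono_fac hai
  have hepib : Epi b := by
    apply epi_of_pseudo_surjective
    intro x₃
    have hg0 : S.g (r ((biprod.inr : P₃ ⟶ P₁ ⊞ P₃) (k₃ x₃))) = 0 := by
      rw [← Abelian.Pseudoelement.comp_apply, ← Abelian.Pseudoelement.comp_apply,
        ← Abelian.Pseudoelement.comp_apply]
      have hm0 : k₃ ≫ (biprod.inr : P₃ ⟶ P₁ ⊞ P₃) ≫ r ≫ S.g = 0 := by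
        rw [hrg, biprod.inr_snd_assoc, w₃]
      rw [hm0]
      exact zero_apply _ _
    obtain ⟨a₁, ha₁⟩ := pseudo_exact_of_exact hS.exact _ hg0
    obtain ⟨p₁, hp₁⟩ := pseudo_surjective_of_epi q₁ a₁
    have heq : r ((biprod.inr : P₃ ⟶ P₁ ⊞ P₃) (k₃ x₃)) =
        r ((biprod.inl : P₁ ⟶ P₁ ⊞ P₃) p₁) := by
      have e1 : r ((biprod.inl : P₁ ⟶ P₁ ⊞ P₃) p₁) = S.f (q₁ p₁) := by
        rw [← Abelian.Pseudoelement.comp_apply, hinlr, Abelian.Pseudoelement.comp_apply]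
      rw [e1, hp₁, ha₁]
    obtain ⟨z, hz0, hzsub⟩ := sub_of_eq_image r _ _ heq
    obtain ⟨w, hw⟩ := pseudo_exact_of_exact (kernelSES r).exact z hz0
    have hsndz : (biprod.snd : P₁ ⊞ P₃ ⟶ P₃) z =
        (biprod.snd : P₁ ⊞ P₃ ⟶ P₃) ((biprod.inr : P₃ ⟶ P₁ ⊞ P₃) (k₃ x₃)) := by
      refine hzsub _ _ ?_
      rw [← Abelian.Pseudoelement.comp_apply, biprod.inl_snd]
      exact zero_apply _ _
    refine ⟨w, pseudo_injective_of_mono k₃ ?_⟩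
    rw [← Abelian.Pseudoelement.comp_apply, hbk, Abelian.Pseudoelement.comp_apply, hw, hsndz,
      ← Abelian.Pseudoelement.comp_apply, biprod.inr_snd]
    exact pseudo_id_apply _
  refine ShortComplex.ShortExact.mk' (exact_of_pseudo_exact _ ?_) hmonoa hepib
  intro w hw0
  have hw0' : b w = 0 := hw0
  have hsnd0 : (biprod.snd : P₁ ⊞ P₃ ⟶ P₃) ((kernel.ι r) w) = 0 := by
    rw [← Abelian.Pseudoelement.comp_apply, ← hbk, Abelian.Pseudoelement.comp_apply, hw0']
    exact apply_zero _
  obtain ⟨p₁, hp₁⟩ := pseudo_exact_of_exact (biprodSES P₁ P₃).exact _ hsnd0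
  have hq0 : S.f (q₁ p₁) = 0 := by
    rw [← Abelian.Pseudoelement.comp_apply, ← hinlr, Abelian.Pseudoelement.comp_apply, hp₁,
      ← Abelian.Pseudoelement.comp_apply, kernel.condition]
    exact zero_apply _ _
  have hq₁0 : q₁ p₁ = 0 := zero_of_map_zero _ (pseudo_injective_of_mono S.f) _ hq0
  obtain ⟨x₁, hx₁⟩ := pseudo_exact_of_exact h₁.exact _ hq₁0
  refine ⟨x₁, pseudo_injective_of_mono (kernel.ι r) ?_⟩
  rw [← Abelian.Pseudoelement.comp_apply, hai, Abelian.Pseudoelement.comp_apply, hx₁, hp₁]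

end Horseshoe

section PdLE

open RelHomDim

variable {T : C → Prop}

lemma pdLE_iso (hT : IsResolving T) {n : ℕ} {M N : C} (e : M ≅ N) (h : pdLE T n M) :
    pdLE T n N := by
  cases n with
  | zero => exact hT.1 M N e h
  | succ n =>
    obtain ⟨S', h1, ⟨i⟩, h2, h3⟩ := h
    exact ⟨S', h1, ⟨i ≪≫ e⟩, h2, h3⟩

lemma pdLE_succ [EnoughProjectives C] (hT : IsResolving T) :
    ∀ {n : ℕ} {M : C}, pdLE T n M → pdLE T (n+1) M := by
  intro n
  induction n with
  | zero =>
    intro M h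
    refine ⟨_, kernelSES (Projective.π M), ⟨Iso.refl M⟩, hT.2.1 _ inferInstance, ?_⟩
    exact hT.2.2.2.1 _ (kernelSES (Projective.π M)) (hT.2.1 _ inferInstance) h
  | succ n ih =>
    intro M h
    obtain ⟨S', h1, hi, h2, h3⟩ := h
    exact ⟨S', h1, hi, h2, ih h3⟩

lemma pdLE_mono [EnoughProjectives C] (hT : IsResolving T) {n m : ℕ} (hnm : n ≤ m) {M : C}
    (h : pdLE T n M) : pdLE T m M := by
  induction m with
  | zero =>
    obtain rfl := Nat.le_zero.1 hnm
    exact h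
  | succ m ih =>
    rcases Nat.lt_or_ge n (m+1) with h' | h'
    · exact pdLE_succ hT (ih (Nat.lt_succ_iff.1 h'))
    · have hnm' : n = m + 1 := le_antisymm hnm h'
      subst hnm'
      exact h

/-- kernels of epis onto objects of `T` preserve `pdLE n`. -/
lemma pdLE_kernel_of_T (hT : IsResolving T) :
    ∀ (n : ℕ) (S : ShortComplex C), S.ShortExact → T S.X₃ → pdLE T n S.X₂ → pdLE T n S.X₁ := by
  intro n
  induction n with
  | zero => intro S hS h3 h2; exact hT.2.2.2.1 S hS h2 h3
  | succ n ih =>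
    intro S hS h3 h2
    obtain ⟨S', hS', ⟨e⟩, hY, hK⟩ := h2
    haveI := hS.mono_f
    haveI := hS'.mono_f
    haveI := hS'.epi_g
    set p : S'.X₂ ⟶ S.X₂ := S'.g ≫ e.hom with hp
    haveI : Epi p := epi_comp _ _
    have hSmod := SESpostIso S' hS' e
    have hTP : T (pullback S.f p) :=
      hT.2.2.2.1 _ (pullbackSndSES S hS p) hY h3
    refine ⟨_, pullbackFstSES S.f p S'.f
      (ShortComplex.mk S'.f (S'.g ≫ e.hom) (by rw [← Category.assoc, S'.zero, zero_comp])).zero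
      hSmod.exact.fIsKernel, ⟨Iso.refl _⟩, hTP, hK⟩

/-- L2: `pdLE n X₂` and `pdLE (n+1) X₃` imply `pdLE n X₁`, given L1 at level `n`. -/
lemma pdLE_L2 (hT : IsResolving T) {n : ℕ}
    (hL1 : ∀ S : ShortComplex C, S.ShortExact → pdLE T n S.X₁ → pdLE T n S.X₃ → pdLE T n S.X₂)
    (S : ShortComplex C) (hS : S.ShortExact)
    (h2 : pdLE T n S.X₂) (h3 : pdLE T (n+1) S.X₃) : pdLE T n S.X₁ := by
  obtain ⟨S₃, hS₃, ⟨e⟩, hY₃, hK₃⟩ := h3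
  haveI := hS.mono_f
  haveI := hS.epi_g
  haveI := hS₃.mono_f
  haveI := hS₃.epi_g
  set v : S₃.X₂ ⟶ S.X₃ := S₃.g ≫ e.hom with hv
  haveI : Epi v := epi_comp _ _
  have hSmod := SESpostIso S₃ hS₃ e
  have hpb1 : pdLE T n (pullback S.g v) :=
    hL1 _ (pullbackFstSES S.g v S₃.f
      (ShortComplex.mk S₃.f (S₃.g ≫ e.hom) (by rw [← Category.assoc, S₃.zero, zero_comp])).zero
      hSmod.exact.fIsKernel) hK₃ h2
  have hpb2 : pdLE T n (pullback v S.g) :=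
    pdLE_iso hT (pullbackSymmetry S.g v) hpb1
  have hSES := pullbackFstSES v S.g S.f S.zero hS.exact.fIsKernel
  exact pdLE_kernel_of_T hT n
    (ShortComplex.mk (pullback.lift (0 : S.X₁ ⟶ S₃.X₂) S.f (by simp [S.zero]))
      (pullback.fst v S.g) (by simp [pullback.lift_fst])) hSES hY₃ hpb2

/-- L3: `pdLE (n+1) X₂` and `pdLE n X₁` imply `pdLE (n+1) X₃`, given L1 at level `n`. -/
lemma pdLE_L3 (hT : IsResolving T) {n : ℕ}
    (hL1 : ∀ S : ShortComplex C, S.ShortExact → pdLE T n S.X₁ → pdLE T n S.X₃ → pdLE T n S.X₂)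
    (S : ShortComplex C) (hS : S.ShortExact)
    (h2 : pdLE T (n+1) S.X₂) (h1 : pdLE T n S.X₁) : pdLE T (n+1) S.X₃ := by
  obtain ⟨S₂, hS₂, ⟨e⟩, hY, hK⟩ := h2
  haveI := hS.mono_f
  haveI := hS.epi_g
  haveI := hS₂.mono_f
  haveI := hS₂.epi_g
  set p : S₂.X₂ ⟶ S.X₂ := S₂.g ≫ e.hom with hp
  haveI : Epi p := epi_comp _ _
  have hSmod := SESpostIso S₂ hS₂ e
  have hpb : pdLE T n (pullback S.f p) :=
    hL1 _ (pullbackFstSES S.f p S₂.f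
      (ShortComplex.mk S₂.f (S₂.g ≫ e.hom) (by rw [← Category.assoc, S₂.zero, zero_comp])).zero
      hSmod.exact.fIsKernel) hK h1
  exact ⟨_, pullbackSndSES S hS p, ⟨Iso.refl _⟩, hY, hpb⟩

/-- projective presentations with controlled kernel, given L1 at level `n`. -/
lemma projPres [EnoughProjectives C] (hT : IsResolving T) {n : ℕ}
    (hL1 : ∀ S : ShortComplex C, S.ShortExact → pdLE T n S.X₁ → pdLE T n S.X₃ → pdLE T n S.X₂)
    {M : C} (h : pdLE T (n+1) M) :
    ∃ (K P : C) (k : K ⟶ P) (q : P ⟶ M) (w : k ≫ q = 0),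
      (ShortComplex.mk k q w).ShortExact ∧ Projective P ∧ pdLE T n K := by
  obtain ⟨S', hS', ⟨e⟩, hY, hK⟩ := h
  haveI := hS'.mono_f
  haveI := hS'.epi_g
  set p : S'.X₂ ⟶ M := S'.g ≫ e.hom with hp
  haveI : Epi p := epi_comp _ _
  have hSmod := SESpostIso S' hS' e
  set q : Projective.over M ⟶ M := Projective.π M with hq
  have hP : pdLE T n (Projective.over M) :=
    pdLE_mono hT (Nat.zero_le n) (hT.2.1 _ inferInstance)
  have hpb1 : pdLE T n (pullback q p) :=
    hL1 _ (pullbackFstSES q p S'.f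
      (ShortComplex.mk S'.f (S'.g ≫ e.hom) (by rw [← Category.assoc, S'.zero, zero_comp])).zero
      hSmod.exact.fIsKernel) hK hP
  have hpb2 : pdLE T n (pullback p q) :=
    pdLE_iso hT (pullbackSymmetry q p) hpb1
  have hY' : pdLE T (n+1) S'.X₂ := pdLE_mono hT (Nat.zero_le (n+1)) hY
  have hker : pdLE T n (kernel q) :=
    pdLE_L2 hT hL1 _ (pullbackFstSES p q (kernel.ι q) (kernel.condition q) (kernelIsKernel q))
      hpb2 hY'
  exact ⟨kernel q, Projective.over M, kernel.ι q, q, kernel.condition q, kernelSES q,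
    inferInstance, hker⟩

/-- L1: extensions. -/
lemma pdLE_L1 [EnoughProjectives C] (hT : IsResolving T) :
    ∀ (n : ℕ) (S : ShortComplex C), S.ShortExact → pdLE T n S.X₁ → pdLE T n S.X₃ →
      pdLE T n S.X₂ := by
  intro n
  induction n with
  | zero => intro S hS h1 h3; exact hT.2.2.1 S hS h1 h3
  | succ n ih =>
    intro S hS h1 h3
    obtain ⟨K₁, P₁, k₁, q₁, w₁, hS₁, hP₁, hK₁⟩ := projPres hT ih h1
    obtain ⟨K₃, P₃, k₃, q₃, w₃, hS₃, hP₃, hK₃⟩ := projPres hT ih h3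
    obtain ⟨r, hr, a, b, wab, hab⟩ := horseshoe S hS q₁ k₁ w₁ hS₁ q₃ k₃ w₃ hS₃ hP₃
    have hK₂ : pdLE T n (kernel r) := ih (ShortComplex.mk a b wab) hab hK₁ hK₃
    haveI := hr
    haveI := hP₁
    haveI := hP₃
    exact ⟨_, kernelSES r, ⟨Iso.refl _⟩, hT.2.1 _ inferInstance, hK₂⟩

end PdLE

section Pd

open RelHomDim

variable {T : C → Prop}

lemma pd_le_iff [EnoughProjectives C] (hT : IsResolving T) {M : C} {n : ℕ} :
    pd T M ≤ (n : ℕ∞) ↔ pdLE T n M := by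
  constructor
  · intro hle
    by_cases hne : {k : ℕ | pdLE T k M}.Nonempty
    · have hmem : pdLE T (sInf {k : ℕ | pdLE T k M}) M := Nat.sInf_mem hne
      have hlow : ((sInf {k : ℕ | pdLE T k M} : ℕ) : ℕ∞) ≤ pd T M := by
        apply le_sInf
        rintro x ⟨k, rfl, hk⟩
        exact_mod_cast Nat.sInf_le hk
      have hfin : ((sInf {k : ℕ | pdLE T k M} : ℕ) : ℕ∞) ≤ (n : ℕ∞) := hlow.trans hle
      exact pdLE_mono hT (by exact_mod_cast hfin) hmem
    · exfalso
      have htop : pd T M = ⊤ := by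
        rw [pd]
        convert sInf_empty using 2
        · exact rfl
        ext x
        simp only [Set.mem_setOf_eq, Set.mem_empty_iff_false, iff_false, not_exists]
        rintro k ⟨rfl, hk⟩
        exact hne ⟨k, hk⟩
      rw [htop] at hle
      exact (ENat.coe_ne_top n) (top_le_iff.1 hle)
  · intro h
    exact sInf_le ⟨n, rfl, h⟩

lemma le_of_forall_coe {x y : ℕ∞} (h : ∀ n : ℕ, y ≤ (n : ℕ∞) → x ≤ (n : ℕ∞)) : x ≤ y := by
  induction y using ENat.recTopCoe with
  | top => exact le_top
  | coe m => exact h m le_rfl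

end Pd

end RelHomDimAux


open RelHomDim RelHomDimAux in
theorem pd_left_eq_max_aux {C : Type u} [Category.{v} C] [Abelian C] [EnoughProjectives C]
    (T : C → Prop) (hT : IsResolving T)
    (S : ShortComplex C) (hS : S.ShortExact)
    (h : pd T S.X₂ ≠ pd T S.X₃) :
    pd T S.X₁ = max (pd T S.X₂) (pd T S.X₃ - 1) := by
  have F1 : pd T S.X₂ ≤ max (pd T S.X₁) (pd T S.X₃) := by
    apply le_of_forall_coe
    intro n hn
    rw [max_le_iff] at hn
    exact (pd_le_iff hT).2 (pdLE_L1 hT n S hS ((pd_le_iff hT).1 hn.1) ((pd_le_iff hT).1 hn.2))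
  have F2 : pd T S.X₁ ≤ max (pd T S.X₂) (pd T S.X₃ - 1) := by
    apply le_of_forall_coe
    intro n hn
    rw [max_le_iff] at hn
    have h3' : pd T S.X₃ ≤ ((n + 1 : ℕ) : ℕ∞) := by
      push_cast
      exact tsub_le_iff_right.1 hn.2
    exact (pd_le_iff hT).2 (pdLE_L2 hT (pdLE_L1 hT n) S hS ((pd_le_iff hT).1 hn.1)
      ((pd_le_iff hT).1 h3'))
  have F3 : pd T S.X₃ ≤ max (pd T S.X₂) (pd T S.X₁ + 1) := by
    apply le_of_forall_coe
    intro n hn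
    rw [max_le_iff] at hn
    cases n with
    | zero =>
      exfalso
      have h1 : (1 : ℕ∞) ≤ ((0 : ℕ) : ℕ∞) := le_trans le_add_self hn.2
      simp at h1
    | succ m =>
      have h2 : pdLE T (m + 1) S.X₂ := (pd_le_iff hT).1 (by exact_mod_cast hn.1)
      have h1' : pd T S.X₁ + 1 ≤ ((m : ℕ) : ℕ∞) + 1 := by
        have := hn.2
        push_cast at this
        exact this
      have h1 : pd T S.X₁ ≤ ((m : ℕ) : ℕ∞) :=
        (WithTop.add_le_add_iff_right (by simp : (1 : ℕ∞) ≠ ⊤)).1 h1'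
      have hp1 : pdLE T m S.X₁ := (pd_le_iff hT).1 h1
      have := pdLE_L3 hT (pdLE_L1 hT m) S hS h2 hp1
      exact_mod_cast (pd_le_iff hT).2 this
  rcases lt_or_gt_of_ne h with hlt | hgt
  · have hble : pd T S.X₂ ≤ pd T S.X₃ - 1 := by
      have hbne : pd T S.X₂ ≠ ⊤ := ne_top_of_lt hlt
      have hadd : pd T S.X₂ + 1 ≤ pd T S.X₃ := (ENat.add_one_le_iff hbne).2 hlt
      exact ENat.le_sub_of_add_le_left (by simp) (by rwa [add_comm])
    rw [max_eq_right hble]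
    apply le_antisymm
    · exact F2.trans (le_of_eq (max_eq_right hble))
    · rcases max_choice (pd T S.X₂) (pd T S.X₁ + 1) with hm | hm
      · rw [hm] at F3
        exact absurd F3 (not_le.2 hlt)
      · rw [hm] at F3
        exact tsub_le_iff_right.2 F3
  · have h31 : pd T S.X₃ - 1 ≤ pd T S.X₂ := le_trans tsub_le_self hgt.le
    rw [max_eq_left h31]
    apply le_antisymm
    · exact F2.trans (le_of_eq (max_eq_left h31))
    · rcases max_choice (pd T S.X₁) (pd T S.X₃) with hm | hm
      · rw [hm] at F1
        exact F1
      · rw [hm] at F1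
        exact absurd F1 (not_le.2 hgt)

open RelHomDim in
/-- If `0 → A₁ → A₂ → A₃ → 0` is short exact, `T` is resolving and
`T-pd A₂ ≠ T-pd A₃`, then `T-pd A₁ = max (T-pd A₂) (T-pd A₃ − 1)`. -/
theorem pd_left_eq_max {C : Type u} [Category.{v} C] [Abelian C] [EnoughProjectives C]
    (T : C → Prop) (hT : IsResolving T)
    (S : ShortComplex C) (hS : S.ShortExact)
    (h : pd T S.X₂ ≠ pd T S.X₃) :
    pd T S.X₁ = max (pd T S.X₂) (pd T S.X₃ - 1) := by
  exact pd_left_eq_max_aux T hT S hS h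
end

section
/- Let T be a resolving subcategory of an abelian category A with enough projectives, and let 0 → A₁ → A₂ → A₃ → 0 be exact. If T-pd A₁ ≠ T-pd A₂, then T-pd A₃ = max{T-pd A₁ + 1, T-pd A₂}. -/
open CategoryTheory

universe v u

namespace RelHomDim

variable {C : Type u} [Category.{v} C] [Abelian C] {T : C → Prop}

open Limits

variable {T : C → Prop}

lemma pdLE_iso (hT : IsResolving T) {n : ℕ} {M N : C} (e : M ≅ N) (h : pdLE T n M) :
    pdLE T n N := by
  cases n with
  | zero => exact hT.1 M N e h
  | succ n =>
    obtain ⟨S, hS, ⟨e'⟩, h2, h1⟩ := h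
    exact ⟨S, hS, ⟨e'.trans e⟩, h2, h1⟩

lemma ses_ker {X Y : C} (f : X ⟶ Y) [Epi f] :
    (ShortComplex.mk (kernel.ι f) f (kernel.condition f)).ShortExact :=
  { exact := ShortComplex.exact_of_f_is_kernel _ (kernelIsKernel f) }

lemma ses_pullback (S : ShortComplex C) (hS : S.ShortExact) {Y : C} (t : Y ⟶ S.X₃) :
    (ShortComplex.mk
      (pullback.lift S.f 0 (by simp [S.zero]) : S.X₁ ⟶ pullback S.g t)
      (pullback.snd S.g t) (pullback.lift_snd _ _ _)).ShortExact := by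
  have := hS.epi_g
  have := hS.mono_f
  have hfac : (pullback.lift S.f 0 (by simp [S.zero]) : S.X₁ ⟶ pullback S.g t) ≫
      pullback.fst S.g t = S.f := pullback.lift_fst _ _ _
  have hmono : Mono (pullback.lift S.f 0 (by simp [S.zero]) : S.X₁ ⟶ pullback S.g t) :=
    mono_of_mono_fac hfac
  refine ShortComplex.ShortExact.mk' ?_ hmono inferInstance
  apply ShortComplex.exact_of_f_is_kernel
  apply KernelFork.IsLimit.ofι' (hi := hmono)
  intro A k hk
  have h1 : (k ≫ pullback.fst S.g t) ≫ S.g = 0 := by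
    rw [Category.assoc, pullback.condition, ← Category.assoc, hk, zero_comp]
  obtain ⟨l, hl⟩ := KernelFork.IsLimit.lift' hS.fIsKernel (k ≫ pullback.fst S.g t) h1
  refine ⟨l, ?_⟩
  apply pullback.hom_ext
  · simpa [hfac] using hl
  · exact (Category.assoc _ _ _).trans <| (congrArg (l ≫ ·) (pullback.lift_snd (f := S.g) (g := t) S.f 0 (by simp [S.zero]))).trans (comp_zero.trans hk.symm)

lemma ses_pullback_mono (S : ShortComplex C) (hS : S.ShortExact) {W : C} (t : W ⟶ S.X₂)
    [Epi t] :
    (ShortComplex.mk (pullback.fst t S.f) (t ≫ S.g)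
      (by rw [← Category.assoc, pullback.condition, Category.assoc, S.zero,
        comp_zero])).ShortExact := by
  have := hS.mono_f
  have := hS.epi_g
  haveI hmono : Mono (pullback.fst t S.f) := inferInstance
  refine ShortComplex.ShortExact.mk' ?_ hmono inferInstance
  apply ShortComplex.exact_of_f_is_kernel
  apply KernelFork.IsLimit.ofι' (hi := hmono)
  intro A k hk
  have h1 : (k ≫ t) ≫ S.g = 0 := by rw [Category.assoc, hk]
  obtain ⟨l, hl⟩ := KernelFork.IsLimit.lift' hS.fIsKernel (k ≫ t) h1
  have hl' : l ≫ S.f = k ≫ t := hl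
  exact ⟨pullback.lift k l hl'.symm, pullback.lift_fst _ _ _⟩

lemma ses_biprod (S : ShortComplex C) (hS : S.ShortExact) (Y : C) :
    (ShortComplex.mk (S.f ≫ biprod.inl) (biprod.map S.g (𝟙 Y))
      (by rw [Category.assoc, biprod.inl_map, ← Category.assoc, S.zero,
        zero_comp])).ShortExact := by
  have := hS.mono_f
  have := hS.epi_g
  haveI hmono : Mono (S.f ≫ (biprod.inl : S.X₂ ⟶ S.X₂ ⊞ Y)) := mono_comp _ _
  have hepi : Epi (biprod.map S.g (𝟙 Y)) := by
    apply Preadditive.epi_of_cancel_zero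
    intro R g hg
    have h1 : S.g ≫ biprod.inl ≫ g = 0 := by
      rw [← biprod.inl_map_assoc S.g (𝟙 Y) g, hg, comp_zero]
    have h2 : biprod.inl ≫ g = 0 := zero_of_epi_comp S.g h1
    have h3 : biprod.inr ≫ g = 0 := by
      have := biprod.inr_map_assoc S.g (𝟙 Y) g
      rw [hg, comp_zero] at this
      simpa using this.symm
    exact biprod.hom_ext' _ _ (by simpa using h2) (by simpa using h3)
  refine ShortComplex.ShortExact.mk' ?_ hmono hepi
  apply ShortComplex.exact_of_f_is_kernel
  apply KernelFork.IsLimit.ofι' (hi := hmono)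
  intro A k hk
  have hsnd : k ≫ biprod.snd = 0 := by
    have := congrArg (fun z => z ≫ biprod.snd) hk
    simpa [biprod.map_snd] using this
  have hfst : (k ≫ biprod.fst) ≫ S.g = 0 := by
    have := congrArg (fun z => z ≫ biprod.fst) hk
    simpa [biprod.map_fst] using this
  obtain ⟨l, hl⟩ := KernelFork.IsLimit.lift' hS.fIsKernel (k ≫ biprod.fst) hfst
  have hl' : l ≫ S.f = k ≫ biprod.fst := hl
  refine ⟨l, ?_⟩
  apply biprod.hom_ext
  · simpa [hl'] using hl'
  · simpa using hsnd.symm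


lemma pdLE_of_T [EnoughProjectives C] (hT : IsResolving T) {M : C} (h : T M) :
    ∀ n, pdLE T n M := by
  intro n
  induction n generalizing M with
  | zero => exact h
  | succ n ih =>
    refine ⟨_, ses_ker (Projective.π M), ⟨Iso.refl M⟩, hT.2.1 _ inferInstance, ?_⟩
    exact ih (hT.2.2.2.1 _ (ses_ker (Projective.π M)) (hT.2.1 _ inferInstance) h)

lemma pdLE_succ [EnoughProjectives C] (hT : IsResolving T) :
    ∀ (n : ℕ) (M : C), pdLE T n M → pdLE T (n + 1) M := by
  intro n
  induction n with
  | zero => exact fun M h => pdLE_of_T hT h 1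
  | succ n ih =>
    rintro M ⟨S, hS, e, h2, h1⟩
    exact ⟨S, hS, e, h2, ih _ h1⟩

lemma pdLE_mono [EnoughProjectives C] (hT : IsResolving T) {k n : ℕ} (hkn : k ≤ n) {M : C}
    (h : pdLE T k M) : pdLE T n M := by
  induction hkn with
  | refl => exact h
  | step _ ih => exact pdLE_succ hT _ _ ih

lemma lemD (hT : IsResolving T) :
    ∀ (n : ℕ) (S : ShortComplex C), S.ShortExact → T S.X₃ → pdLE T n S.X₂ → pdLE T n S.X₁ := by
  intro n
  cases n with
  | zero => exact fun S hS h3 h2 => hT.2.2.2.1 S hS h2 h3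
  | succ n =>
    intro S hS h3 h2
    obtain ⟨S', hS', ⟨e⟩, hTV, hV1⟩ := h2
    haveI : Epi S'.g := hS'.epi_g
    haveI hEt : Epi (S'.g ≫ e.hom) := epi_comp _ _
    have hS'' : (ShortComplex.mk S'.f (S'.g ≫ e.hom)
        (by rw [← Category.assoc, S'.zero, zero_comp])).ShortExact := by
      refine ShortComplex.shortExact_of_iso ?_ hS'
      exact ShortComplex.isoMk (Iso.refl _) (Iso.refl _) e (by simp) (by simp)
    have h1 := ses_pullback _ hS'' S.f
    have h2' := ses_pullback_mono S hS (S'.g ≫ e.hom)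
    have hK : T (pullback (S'.g ≫ e.hom) S.f) := hT.2.2.2.1 _ h2' hTV h3
    exact ⟨_, h1, ⟨Iso.refl _⟩, hK, hV1⟩

lemma lemF (hT : IsResolving T) :
    ∀ (n : ℕ) (X Y : C), T Y → pdLE T n X → pdLE T n (X ⊞ Y) := by
  intro n
  induction n with
  | zero =>
    intro X Y hY hX
    exact hT.2.2.1 _ (ShortComplex.Splitting.ofHasBinaryBiproduct X Y).shortExact hX hY
  | succ n ih =>
    rintro X Y hY ⟨S', hS', ⟨e⟩, hT2, h1⟩
    refine ⟨_, ses_biprod S' hS' Y, ⟨biprod.mapIso e (Iso.refl Y)⟩, ?_, h1⟩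
    show T (S'.X₂ ⊞ Y)
    exact hT.2.2.1 _ (ShortComplex.Splitting.ofHasBinaryBiproduct S'.X₂ Y).shortExact hT2 hY

lemma syz' (hT : IsResolving T) (n : ℕ) (S2 : ShortComplex C) (hS2 : S2.ShortExact)
    [Projective S2.X₂] {M : C} (e : S2.X₃ ≅ M) (h : pdLE T (n + 1) M) :
    pdLE T n S2.X₁ := by
  obtain ⟨S', hS', ⟨e'⟩, hT2, h1⟩ := h
  haveI : Epi S'.g := hS'.epi_g
  haveI hEt : Epi (S'.g ≫ (e'.trans e.symm).hom) := epi_comp _ _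
  have hS'' : (ShortComplex.mk S'.f (S'.g ≫ (e'.trans e.symm).hom)
      (by rw [← Category.assoc, S'.zero, zero_comp])).ShortExact := by
    refine ShortComplex.shortExact_of_iso ?_ hS'
    exact ShortComplex.isoMk (Iso.refl _) (Iso.refl _) (e'.trans e.symm) (by simp) (by simp)
  have h1' := ses_pullback S2 hS2 (S'.g ≫ (e'.trans e.symm).hom)
  have h2' := ses_pullback _ hS'' S2.g
  have hsplit := h2'.splittingOfProjective
  have hiso := hsplit.isoBinaryBiproduct
  have hpd1 : pdLE T n (S'.X₁ ⊞ S2.X₂) := lemF hT n _ _ (hT.2.1 _ inferInstance) h1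
  have hpd2 : pdLE T n (pullback (S'.g ≫ (e'.trans e.symm).hom) S2.g) :=
    pdLE_iso hT hiso.symm hpd1
  have hpd3 : pdLE T n (pullback S2.g (S'.g ≫ (e'.trans e.symm).hom)) :=
    pdLE_iso hT (pullbackSymmetry _ _) hpd2
  have hres := lemD hT n _ h1' hT2 hpd3
  exact hres

lemma lemAB [EnoughProjectives C] (hT : IsResolving T) :
    ∀ n : ℕ,
      (∀ (S : ShortComplex C), S.ShortExact →
        pdLE T n S.X₁ → pdLE T n S.X₃ → pdLE T n S.X₂) ∧
      (∀ (S : ShortComplex C), S.ShortExact →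
        pdLE T n S.X₂ → pdLE T (n + 1) S.X₃ → pdLE T n S.X₁) := by
  intro n
  induction n with
  | zero =>
    refine ⟨fun S hS h1 h3 => hT.2.2.1 S hS h1 h3, ?_⟩
    intro S hS h2 h3
    obtain ⟨S', hS', ⟨e⟩, hT2, h1⟩ := h3
    haveI : Epi S'.g := hS'.epi_g
    haveI hEt : Epi (S'.g ≫ e.hom) := epi_comp _ _
    have hS'' : (ShortComplex.mk S'.f (S'.g ≫ e.hom)
        (by rw [← Category.assoc, S'.zero, zero_comp])).ShortExact := by
      refine ShortComplex.shortExact_of_iso ?_ hS'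
      exact ShortComplex.isoMk (Iso.refl _) (Iso.refl _) e (by simp) (by simp)
    have h1' := ses_pullback S hS (S'.g ≫ e.hom)
    have h2' := ses_pullback _ hS'' S.g
    have hZ' : T (pullback (S'.g ≫ e.hom) S.g) := hT.2.2.1 _ h2' h1 h2
    have hZ : T (pullback S.g (S'.g ≫ e.hom)) :=
      hT.1 _ _ (pullbackSymmetry _ _) hZ'
    have hres := hT.2.2.2.1 _ h1' hZ hT2
    exact hres
  | succ n ih =>
    obtain ⟨An, Bn⟩ := ih
    have Asucc : ∀ (S : ShortComplex C), S.ShortExact →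
        pdLE T (n + 1) S.X₁ → pdLE T (n + 1) S.X₃ → pdLE T (n + 1) S.X₂ := by
      intro S hS h1 h3
      have hS0 := ses_ker (Projective.π S.X₂)
      have h2' := ses_pullback_mono S hS (Projective.π S.X₂)
      have hK3 : pdLE T n (pullback (Projective.π S.X₂) S.f) :=
        syz' hT n _ h2' (Iso.refl S.X₃) h3
      have h1' := ses_pullback _ hS0 S.f
      have hOm : pdLE T n (kernel (Projective.π S.X₂)) := Bn _ h1' hK3 h1
      exact ⟨_, hS0, ⟨Iso.refl _⟩, hT.2.1 _ inferInstance, hOm⟩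
    refine ⟨Asucc, ?_⟩
    intro S hS h2 h3
    obtain ⟨S', hS', ⟨e⟩, hTY, hY1⟩ := h3
    haveI : Epi S'.g := hS'.epi_g
    haveI hEt : Epi (S'.g ≫ e.hom) := epi_comp _ _
    have hS'' : (ShortComplex.mk S'.f (S'.g ≫ e.hom)
        (by rw [← Category.assoc, S'.zero, zero_comp])).ShortExact := by
      refine ShortComplex.shortExact_of_iso ?_ hS'
      exact ShortComplex.isoMk (Iso.refl _) (Iso.refl _) e (by simp) (by simp)
    have h1' := ses_pullback S hS (S'.g ≫ e.hom)
    have h2' := ses_pullback _ hS'' S.g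
    have hZ' : pdLE T (n + 1) (pullback (S'.g ≫ e.hom) S.g) := Asucc _ h2' hY1 h2
    have hZ : pdLE T (n + 1) (pullback S.g (S'.g ≫ e.hom)) :=
      pdLE_iso hT (pullbackSymmetry _ _) hZ'
    have hres := lemD hT (n + 1) _ h1' hTY hZ
    exact hres

lemma lemC [EnoughProjectives C] (hT : IsResolving T) (n : ℕ) (S : ShortComplex C)
    (hS : S.ShortExact) (h1 : pdLE T n S.X₁) (h2 : pdLE T (n + 1) S.X₂) :
    pdLE T (n + 1) S.X₃ := by
  obtain ⟨S', hS', ⟨e⟩, hTW, hW1⟩ := h2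
  haveI : Epi S'.g := hS'.epi_g
  haveI hEt : Epi (S'.g ≫ e.hom) := epi_comp _ _
  have hS'' : (ShortComplex.mk S'.f (S'.g ≫ e.hom)
      (by rw [← Category.assoc, S'.zero, zero_comp])).ShortExact := by
    refine ShortComplex.shortExact_of_iso ?_ hS'
    exact ShortComplex.isoMk (Iso.refl _) (Iso.refl _) e (by simp) (by simp)
  have h1' := ses_pullback _ hS'' S.f
  have h2' := ses_pullback_mono S hS (S'.g ≫ e.hom)
  have hK : pdLE T n (pullback (S'.g ≫ e.hom) S.f) := (lemAB hT n).1 _ h1' hW1 h1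
  exact ⟨_, h2', ⟨Iso.refl _⟩, hTW, hK⟩


lemma pd_le_iff [EnoughProjectives C] (hT : IsResolving T) {M : C} {n : ℕ} :
    pd T M ≤ (n : ℕ∞) ↔ pdLE T n M := by
  constructor
  · intro h
    have h' : pd T M < ((n + 1 : ℕ) : ℕ∞) := lt_of_le_of_lt h (by exact_mod_cast Nat.lt_succ_self n)
    obtain ⟨a, ⟨k, rfl, hk⟩, hlt⟩ := sInf_lt_iff.mp h'
    exact pdLE_mono hT (Nat.lt_succ_iff.mp (by exact_mod_cast hlt)) hk
  · intro h
    exact sInf_le ⟨n, rfl, h⟩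

lemma exists_pdLE_of_ne_top [EnoughProjectives C] (hT : IsResolving T) {M : C}
    (h : pd T M ≠ ⊤) : ∃ k : ℕ, pd T M = (k : ℕ∞) ∧ pdLE T k M := by
  obtain ⟨k, hk⟩ := WithTop.ne_top_iff_exists.mp h
  exact ⟨k, hk.symm, (pd_le_iff hT).mp hk.symm.le⟩

end RelHomDim


open RelHomDim in
/-- If `0 → A₁ → A₂ → A₃ → 0` is short exact, `T` is resolving and
`T-pd A₁ ≠ T-pd A₂`, then `T-pd A₃ = max (T-pd A₁ + 1) (T-pd A₂)`. -/
theorem pd_right_eq_max {C : Type u} [Category.{v} C] [Abelian C] [EnoughProjectives C]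
    (T : C → Prop) (hT : IsResolving T)
    (S : ShortComplex C) (hS : S.ShortExact)
    (h : pd T S.X₁ ≠ pd T S.X₂) :
    pd T S.X₃ = max (pd T S.X₁ + 1) (pd T S.X₂) := by
  rcases h.lt_or_gt with h12 | h21
  · -- pd X₁ < pd X₂
    obtain ⟨k₁, hk₁, hp₁⟩ := exists_pdLE_of_ne_top hT h12.ne_top
    have hmax : max (pd T S.X₁ + 1) (pd T S.X₂) = pd T S.X₂ :=
      max_eq_right ((ENat.add_one_le_iff h12.ne_top).mpr h12)
    rw [hmax]
    apply le_antisymm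
    · by_cases h2top : pd T S.X₂ = ⊤
      · rw [h2top]; exact le_top
      · obtain ⟨k₂, hk₂, hp₂⟩ := exists_pdLE_of_ne_top hT h2top
        have hk12 : k₁ < k₂ := by
          rw [hk₁, hk₂] at h12; exact_mod_cast h12
        obtain ⟨m, rfl⟩ : ∃ m, k₂ = m + 1 := ⟨k₂ - 1, by omega⟩
        rw [hk₂]
        exact (pd_le_iff hT).mpr
          (lemC hT m S hS (pdLE_mono hT (by omega) hp₁) hp₂)
    · by_cases h3top : pd T S.X₃ = ⊤
      · rw [h3top]; exact le_top
      · obtain ⟨k₃, hk₃, hp₃⟩ := exists_pdLE_of_ne_top hT h3top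
        have hA : pdLE T (max k₁ k₃) S.X₂ :=
          (lemAB hT _).1 S hS (pdLE_mono hT (le_max_left _ _) hp₁)
            (pdLE_mono hT (le_max_right _ _) hp₃)
        have h2le : pd T S.X₂ ≤ ((max k₁ k₃ : ℕ) : ℕ∞) := (pd_le_iff hT).mpr hA
        have h2le' : pd T S.X₂ ≤ max (pd T S.X₁) (pd T S.X₃) := by
          rw [hk₁, hk₃]
          refine h2le.trans ?_
          rcases le_total k₁ k₃ with hkk | hkk
          · rw [max_eq_right hkk]; exact le_max_right _ _
          · rw [max_eq_left hkk]; exact le_max_left _ _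
        rcases le_max_iff.mp h2le' with hle | hle
        · exact absurd (lt_of_lt_of_le h12 hle) (lt_irrefl _)
        · exact hle
  · -- pd X₂ < pd X₁
    obtain ⟨k₂, hk₂, hp₂⟩ := exists_pdLE_of_ne_top hT h21.ne_top
    have hmax : max (pd T S.X₁ + 1) (pd T S.X₂) = pd T S.X₁ + 1 :=
      max_eq_left (h21.le.trans le_self_add)
    rw [hmax]
    apply le_antisymm
    · by_cases h1top : pd T S.X₁ = ⊤
      · rw [h1top]; simp
      · obtain ⟨k₁, hk₁, hp₁⟩ := exists_pdLE_of_ne_top hT h1top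
        have hk21 : k₂ < k₁ := by
          rw [hk₁, hk₂] at h21; exact_mod_cast h21
        have hC : pdLE T (k₁ + 1) S.X₃ :=
          lemC hT k₁ S hS hp₁ (pdLE_mono hT (by omega) hp₂)
        rw [hk₁]
        calc pd T S.X₃ ≤ ((k₁ + 1 : ℕ) : ℕ∞) := (pd_le_iff hT).mpr hC
          _ = (k₁ : ℕ∞) + 1 := by push_cast; rfl
    · by_contra hcon
      push_neg at hcon
      by_cases h1top : pd T S.X₁ = ⊤
      · have h3top : pd T S.X₃ ≠ ⊤ := by
          intro h3
          rw [h3, h1top] at hcon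
          simp at hcon
        obtain ⟨k₃, hk₃, hp₃⟩ := exists_pdLE_of_ne_top hT h3top
        have hB : pdLE T (max k₂ k₃) S.X₁ :=
          (lemAB hT _).2 S hS (pdLE_mono hT (le_max_left _ _) hp₂)
            (pdLE_mono hT (by omega) hp₃)
        have : pd T S.X₁ ≤ ((max k₂ k₃ : ℕ) : ℕ∞) := (pd_le_iff hT).mpr hB
        rw [h1top] at this
        exact absurd this (by simp)
      · obtain ⟨k₁, hk₁, hp₁⟩ := exists_pdLE_of_ne_top hT h1top
        have hk21 : k₂ < k₁ := by
          rw [hk₁, hk₂] at h21; exact_mod_cast h21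
        have h3le : pd T S.X₃ ≤ (k₁ : ℕ∞) := by
          rw [hk₁] at hcon
          exact (ENat.lt_add_one_iff (by simp)).mp hcon
        have hp₃ : pdLE T k₁ S.X₃ := (pd_le_iff hT).mp h3le
        obtain ⟨m, rfl⟩ : ∃ m, k₁ = m + 1 := ⟨k₁ - 1, by omega⟩
        have hB : pdLE T m S.X₁ :=
          (lemAB hT _).2 S hS (pdLE_mono hT (by omega) hp₂) hp₃
        have : pd T S.X₁ ≤ (m : ℕ∞) := (pd_le_iff hT).mpr hB
        rw [hk₁] at this
        exact absurd (show m + 1 ≤ m by exact_mod_cast this) (by omega)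
end
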